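/- arXiv:1501.02731 — 8 statements merged into one kernel-verified Lean document; each statement's English description precedes it below -/
import Mathlib

section
/- If f is a non-constant rational function with rational coefficients and ζ is a Liouville number (not a pole of f), then f(ζ) is a Liouville number. -/
lemma aux_int_coeff (c : ℚ) (N : ℕ) (h : (c.den : ℕ) ∣ N) :
    ∃ z : ℤ, (z : ℚ) = (N : ℚ) * c := by
  obtain ⟨k, hk⟩ := h
  refine ⟨(k : ℤ) * c.num, ?_⟩
  have h1 : c * c.den = c.num := Rat.mul_den_eq_num c
  push_cast
  rw [hk]
  push_cast
  rw [mul_comm (c.den : ℚ) (k : ℚ), mul_assoc]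
  rw [mul_comm (c.den : ℚ) c, h1]

lemma aux_int_eval (R : Polynomial ℚ) (N D : ℕ) (hdeg : R.natDegree ≤ D)
    (hden : ∀ i, ((R.coeff i).den : ℕ) ∣ N) (a b : ℤ) (hb : b ≠ 0) :
    ∃ z : ℤ, (z : ℚ) = (N : ℚ) * (b : ℚ) ^ D * R.eval ((a : ℚ) / (b : ℚ)) := by
  choose t ht using fun i => aux_int_coeff (R.coeff i) N (hden i)
  refine ⟨∑ i ∈ Finset.range (D + 1), t i * a ^ i * b ^ (D - i), ?_⟩
  rw [Polynomial.eval_eq_sum_range' (Nat.lt_succ_of_le hdeg), Finset.mul_sum]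
  push_cast
  refine Finset.sum_congr rfl fun i hi => ?_
  have hiD : i ≤ D := Nat.lt_succ_iff.mp (Finset.mem_range.mp hi)
  have hbQ : (b : ℚ) ≠ 0 := Int.cast_ne_zero.mpr hb
  rw [ht i]
  have hpow : (b : ℚ) ^ D = (b : ℚ) ^ i * (b : ℚ) ^ (D - i) := by
    rw [← pow_add, Nat.add_sub_cancel' hiD]
  rw [hpow, div_pow]
  field_simp

theorem rational_function_maps_liouville_to_liouville
    (P Q : Polynomial ℚ) (hQ : Q ≠ 0)
    (f : ℝ → ℝ)
    (hf : ∀ x : ℝ, f x =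
      Polynomial.eval x (P.map (algebraMap ℚ ℝ)) /
        Polynomial.eval x (Q.map (algebraMap ℚ ℝ)))
    (hnc : ¬∃ c : ℝ, ∀ x : ℝ,
      Polynomial.eval x (Q.map (algebraMap ℚ ℝ)) ≠ 0 → f x = c)
    (ζ : ℝ) (hζ : Liouville ζ)
    (hpole : Polynomial.eval ζ (Q.map (algebraMap ℚ ℝ)) ≠ 0) :
    Liouville (f ζ) := by
  set φ := algebraMap ℚ ℝ with hφ
  have hcast : ∀ (R : Polynomial ℚ) (r : ℚ),
      Polynomial.eval ((r : ℝ)) (R.map φ) = ((R.eval r : ℚ) : ℝ) := by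
    intro R r
    rw [Polynomial.eval_map, show ((r : ℝ)) = φ r from (eq_ratCast φ r).symm,
      Polynomial.eval₂_at_apply]
    exact eq_ratCast φ _
  -- Step 1: f ζ is irrational
  have htr : Transcendental ℚ ζ := fun h =>
    hζ.transcendental ((IsFractionRing.isAlgebraic_iff ℤ ℚ ℝ).mpr h)
  have hirr : Irrational (f ζ) := by
    rintro ⟨r, hr⟩
    set R : Polynomial ℚ := P - Polynomial.C r * Q with hR
    have haev : Polynomial.aeval ζ R = 0 := by
      rw [Polynomial.aeval_def, ← Polynomial.eval_map, hR,
        Polynomial.map_sub, Polynomial.map_mul, Polynomial.map_C]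
      simp only [Polynomial.eval_sub, Polynomial.eval_mul, Polynomial.eval_C]
      have := hf ζ
      rw [← hr] at this
      have hP : Polynomial.eval ζ (P.map φ) = r * Polynomial.eval ζ (Q.map φ) := by
        field_simp at this
        rw [this]
      rw [hP, show (algebraMap ℚ ℝ) r = (r:ℝ) from eq_ratCast φ r]
      ring
    have hR0 : R = 0 := by
      by_contra h
      exact htr ⟨R, h, haev⟩
    have hPQ : P = Polynomial.C r * Q := sub_eq_zero.mp hR0
    apply hnc
    refine ⟨(r : ℝ), fun x hx => ?_⟩
    rw [hf x, hPQ, Polynomial.map_mul, Polynomial.map_C]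
    simp only [Polynomial.eval_mul, Polynomial.eval_C]
    rw [mul_div_assoc, div_self hx, mul_one]
    exact eq_ratCast φ r
  -- Step 2: an interval around ζ on which Q does not vanish
  have hcontq : ContinuousAt (fun x => Polynomial.eval x (Q.map φ)) ζ :=
    (Q.map φ).continuous.continuousAt
  have hev := hcontq.eventually_ne hpole
  rw [Metric.eventually_nhds_iff] at hev
  obtain ⟨ε, hε, hball⟩ := hev
  set δ := ε / 2 with hδdef
  have hδ : 0 < δ := by positivity
  set I : Set ℝ := Set.Icc (ζ - δ) (ζ + δ) with hI
  have hζI : ζ ∈ I := by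
    rw [hI, Set.mem_Icc]
    constructor <;> linarith
  have hQI : ∀ x ∈ I, Polynomial.eval x (Q.map φ) ≠ 0 := by
    intro x hx
    apply hball
    rw [hI, Set.mem_Icc] at hx
    rw [Real.dist_eq, abs_lt]
    constructor <;> linarith [hx.1, hx.2]
  -- Step 3: Lipschitz bound for g = p/q on I
  set g : ℝ → ℝ := fun x =>
    Polynomial.eval x (P.map φ) / Polynomial.eval x (Q.map φ) with hg
  set F : ℝ → ℝ := fun x =>
    (Polynomial.eval x (Polynomial.derivative (P.map φ)) * Polynomial.eval x (Q.map φ) -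
      Polynomial.eval x (P.map φ) * Polynomial.eval x (Polynomial.derivative (Q.map φ))) /
      (Polynomial.eval x (Q.map φ)) ^ 2 with hF
  have hderiv : ∀ x ∈ I, HasDerivWithinAt g (F x) I x := by
    intro x hx
    exact (((P.map φ).hasDerivAt x).div ((Q.map φ).hasDerivAt x) (hQI x hx)).hasDerivWithinAt
  have hFcont : ContinuousOn F I := by
    apply ContinuousOn.div
    · exact (((Polynomial.derivative (P.map φ)).continuous.mul
        (Q.map φ).continuous).sub ((P.map φ).continuous.mul
        (Polynomial.derivative (Q.map φ)).continuous)).continuousOn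
    · exact ((Q.map φ).continuous.pow 2).continuousOn
    · exact fun x hx => pow_ne_zero 2 (hQI x hx)
  obtain ⟨L₀, hL₀⟩ := isCompact_Icc.exists_bound_of_continuousOn hFcont
  set L : ℝ := max L₀ 1 with hLdef
  have hL1 : 1 ≤ L := le_max_right _ _
  have hL0 : 0 < L := lt_of_lt_of_le one_pos hL1
  have hLip : ∀ x ∈ I, ∀ y ∈ I, |g y - g x| ≤ L * |y - x| := by
    intro x hx y hy
    have := Convex.norm_image_sub_le_of_norm_hasDerivWithin_le (C := L) hderiv
      (fun z hz => le_trans (hL₀ z hz) (le_max_left L₀ 1)) (convex_Icc _ _) hx hy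
    simpa [Real.norm_eq_abs] using this
  -- bound for |Q| on I
  obtain ⟨M₀, hM₀⟩ := isCompact_Icc.exists_bound_of_continuousOn
    ((Q.map φ).continuous.continuousOn : ContinuousOn (fun x => Polynomial.eval x (Q.map φ)) I)
  have hM0 : 0 ≤ M₀ := le_trans (norm_nonneg _) (hM₀ ζ hζI)
  -- Step 4: constants
  set D : ℕ := max P.natDegree Q.natDegree with hD
  set N : ℕ := ∏ i ∈ Finset.range (D + 1), ((P.coeff i).den * (Q.coeff i).den) with hN
  have hNpos : 0 < N := Finset.prod_pos (fun i _ => Nat.mul_pos (P.coeff i).pos (Q.coeff i).pos)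
  have hNR : (1:ℝ) ≤ (N:ℝ) := by exact_mod_cast hNpos
  have hdenP : ∀ i, ((P.coeff i).den : ℕ) ∣ N := by
    intro i
    rcases le_or_gt i D with h | h
    · exact dvd_trans (dvd_mul_right _ _)
        (Finset.dvd_prod_of_mem _ (Finset.mem_range.mpr (Nat.lt_succ_of_le h)))
    · rw [Polynomial.coeff_eq_zero_of_natDegree_lt
        (lt_of_le_of_lt (le_max_left _ _) h)]
      simp
  have hdenQ : ∀ i, ((Q.coeff i).den : ℕ) ∣ N := by
    intro i
    rcases le_or_gt i D with h | h
    · exact dvd_trans (dvd_mul_left _ _)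
        (Finset.dvd_prod_of_mem _ (Finset.mem_range.mpr (Nat.lt_succ_of_le h)))
    · rw [Polynomial.coeff_eq_zero_of_natDegree_lt
        (lt_of_le_of_lt (le_max_right _ _) h)]
      simp
  set C₁ : ℝ := 2 * N * (M₀ + 1) with hC₁
  have hC₁pos : 0 < C₁ := by positivity
  have hC₁1 : 1 ≤ C₁ := by nlinarith
  -- Step 5: main argument
  intro n
  obtain ⟨k, hk⟩ := pow_unbounded_of_one_lt (max (L * C₁ ^ n) (1 / δ)) (one_lt_two (α := ℝ))
  have hkL : L * C₁ ^ n < 2 ^ k := lt_of_le_of_lt (le_max_left _ _) hk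
  have hkδ : 1 / δ < 2 ^ k := lt_of_le_of_lt (le_max_right _ _) hk
  set m : ℕ := D * n + k with hm
  obtain ⟨a, b, hb, hne, happ⟩ := hζ m
  have hb0 : b ≠ 0 := by omega
  have hbR : (2:ℝ) ≤ (b:ℝ) := by exact_mod_cast hb
  have hbpos : (0:ℝ) < (b:ℝ) := by linarith
  have hbm : (0:ℝ) < (b:ℝ) ^ m := by positivity
  set x₀ : ℚ := (a : ℚ) / (b : ℚ) with hx₀def
  have hx₀cast : ((x₀ : ℚ) : ℝ) = (a : ℝ) / (b : ℝ) := by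
    rw [hx₀def, Rat.cast_div, Rat.cast_intCast, Rat.cast_intCast]
  have h2k : (2:ℝ) ^ k ≤ (b:ℝ) ^ m := by
    calc (2:ℝ) ^ k ≤ (b:ℝ) ^ k := pow_le_pow_left₀ (by norm_num) hbR k
    _ ≤ (b:ℝ) ^ m := pow_le_pow_right₀ (by linarith) (by omega)
  have hsmall : |ζ - (x₀ : ℝ)| < δ := by
    rw [hx₀cast]
    calc |ζ - (a:ℝ)/(b:ℝ)| < 1 / (b:ℝ) ^ m := happ
    _ ≤ 1 / 2 ^ k := by
        apply div_le_div_of_nonneg_left one_pos.le (by positivity) h2k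
    _ < δ := by
        rw [div_lt_iff₀ (by positivity)]
        rw [div_lt_iff₀ hδ] at hkδ
        linarith [mul_comm δ ((2:ℝ)^k)]
  have hx₀I : ((x₀ : ℚ) : ℝ) ∈ I := by
    rw [abs_lt] at hsmall
    rw [hI, Set.mem_Icc]
    constructor <;> linarith [hsmall.1, hsmall.2]
  have hQx₀ : Q.eval x₀ ≠ 0 := by
    intro h
    apply hQI _ hx₀I
    rw [hcast Q x₀, h]
    norm_num
  obtain ⟨A₁, hA₁⟩ := aux_int_eval P N D (le_max_left _ _) hdenP a b hb0
  obtain ⟨B₁, hB₁⟩ := aux_int_eval Q N D (le_max_right _ _) hdenQ a b hb0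
  rw [← hx₀def] at hA₁ hB₁
  have hbQ : ((b:ℚ)) ≠ 0 := Int.cast_ne_zero.mpr hb0
  have hNQ : (N : ℚ) ≠ 0 := by exact_mod_cast hNpos.ne'
  have hB₁ne : B₁ ≠ 0 := by
    intro h
    rw [h] at hB₁
    have h2 := hB₁.symm
    rw [Int.cast_zero] at h2
    exact (mul_ne_zero (mul_ne_zero hNQ (pow_ne_zero D hbQ)) hQx₀) h2
  -- value of g at x₀
  have hNbR : ((N:ℝ) * (b:ℝ) ^ D) ≠ 0 := by positivity
  have hgx₀ : g ((x₀ : ℚ) : ℝ) = (A₁ : ℝ) / (B₁ : ℝ) := by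
    rw [hg]
    simp only
    rw [hcast P x₀, hcast Q x₀]
    have key : (((N : ℚ) * (b:ℚ) ^ D * P.eval x₀ : ℚ) : ℝ) /
          (((N : ℚ) * (b:ℚ) ^ D * Q.eval x₀ : ℚ) : ℝ)
        = ((P.eval x₀ : ℚ) : ℝ) / ((Q.eval x₀ : ℚ) : ℝ) := by
      push_cast
      rw [mul_div_mul_left _ _ hNbR]
    rw [← key, ← hA₁, ← hB₁]
    push_cast
    ring
  -- bound on B₁
  have hB₁bound : |(B₁ : ℝ)| ≤ (N:ℝ) * (b:ℝ) ^ D * M₀ := by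
    have h1 : ((B₁ : ℚ) : ℝ) = (N:ℝ) * (b:ℝ) ^ D * ((Q.eval x₀ : ℚ) : ℝ) := by
      rw [hB₁]; push_cast; ring
    have h2 : |(B₁ : ℝ)| = (N:ℝ) * (b:ℝ) ^ D * |((Q.eval x₀ : ℚ) : ℝ)| := by
      rw [show ((B₁:ℤ):ℝ) = ((B₁ : ℚ) : ℝ) by push_cast; ring, h1, abs_mul, abs_mul]
      rw [abs_of_nonneg (by positivity : (0:ℝ) ≤ (N:ℝ)),
        abs_of_nonneg (by positivity : (0:ℝ) ≤ (b:ℝ) ^ D)]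
    rw [h2]
    have h3 : |((Q.eval x₀ : ℚ) : ℝ)| ≤ M₀ := by
      rw [← hcast Q x₀]
      simpa [Real.norm_eq_abs] using hM₀ _ hx₀I
    exact mul_le_mul_of_nonneg_left h3 (by positivity)
  -- choose the final witnesses
  obtain ⟨a', b', hb'eq, hb'val⟩ :
      ∃ a' b' : ℤ, b' = 2 * |B₁| ∧ (a' : ℝ) / (b' : ℝ) = (A₁ : ℝ) / (B₁ : ℝ) := by
    rcases hB₁ne.lt_or_gt with h | h
    · have hBR : (B₁:ℝ) < 0 := by exact_mod_cast h
      refine ⟨-2 * A₁, 2 * |B₁|, rfl, ?_⟩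
      rw [abs_of_neg h]
      push_cast
      rw [div_eq_div_iff (by linarith) (by linarith)]
      ring
    · have hBR : (0:ℝ) < (B₁:ℝ) := by exact_mod_cast h
      refine ⟨2 * A₁, 2 * |B₁|, rfl, ?_⟩
      rw [abs_of_pos h]
      push_cast
      rw [div_eq_div_iff (by linarith) (by linarith)]
      ring
  have hb'pos : 1 < b' := by
    have : 1 ≤ |B₁| := Int.one_le_abs hB₁ne
    omega
  have hb'R : (0:ℝ) < (b' : ℝ) := by exact_mod_cast lt_trans one_pos hb'pos
  have hb'bound : (b' : ℝ) ≤ C₁ * (b:ℝ) ^ D := by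
    have h1 : ((b':ℤ):ℝ) = 2 * |(B₁ : ℝ)| := by
      rw [hb'eq]; push_cast; ring
    rw [h1, hC₁]
    have hbD1 : (1:ℝ) ≤ (b:ℝ) ^ D := one_le_pow₀ (by linarith)
    nlinarith [hB₁bound, hbD1, hNR, hM0,
      mul_le_mul_of_nonneg_left hB₁bound (by norm_num : (0:ℝ) ≤ 2)]
  -- final verification
  refine ⟨a', b', hb'pos, ?_, ?_⟩
  · intro hcontra
    apply hirr
    exact ⟨(a' : ℚ) / (b' : ℚ), by rw [hcontra]; push_cast; ring⟩
  · have key1 : |f ζ - (a':ℝ)/(b':ℝ)| ≤ L * |ζ - ((x₀:ℚ):ℝ)| := by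
      rw [hb'val, ← hgx₀, show f ζ = g ζ from hf ζ]
      exact hLip _ hx₀I _ hζI
    have happ' : |ζ - ((x₀:ℚ):ℝ)| < 1 / (b:ℝ)^m := by rw [hx₀cast]; exact happ
    have key2 : L * |ζ - ((x₀:ℚ):ℝ)| < L / (b:ℝ)^m := by
      calc L * |ζ - ((x₀:ℚ):ℝ)| < L * (1 / (b:ℝ)^m) :=
        mul_lt_mul_of_pos_left happ' hL0
      _ = L / (b:ℝ)^m := by ring
    have key3 : L / (b:ℝ)^m < 1 / (b':ℝ)^n := by
      rw [div_lt_div_iff₀ hbm (by positivity)]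
      have h1 : (b':ℝ)^n ≤ (C₁ * (b:ℝ)^D)^n := pow_le_pow_left₀ hb'R.le hb'bound n
      have h2 : (C₁ * (b:ℝ)^D)^n = C₁^n * (b:ℝ)^(D*n) := by
        rw [mul_pow, ← pow_mul]
      calc L * (b':ℝ)^n ≤ L * (C₁^n * (b:ℝ)^(D*n)) := by
            rw [← h2]; exact mul_le_mul_of_nonneg_left h1 hL0.le
        _ = (L * C₁^n) * (b:ℝ)^(D*n) := by ring
        _ < 2^k * (b:ℝ)^(D*n) := mul_lt_mul_of_pos_right hkL (by positivity)
        _ ≤ (b:ℝ)^k * (b:ℝ)^(D*n) :=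
            mul_le_mul_of_nonneg_right (pow_le_pow_left₀ (by norm_num) hbR k) (by positivity)
        _ = (b:ℝ)^m := by rw [← pow_add]; congr 1; omega
        _ = 1 * (b:ℝ)^m := by ring
    calc |f ζ - (a':ℝ)/(b':ℝ)| ≤ L * |ζ - ((x₀:ℚ):ℝ)| := key1
      _ < L / (b:ℝ)^m := key2
      _ < 1 / (b':ℝ)^n := key3
end

section
/- If ζ is a Liouville number and k is a positive integer, then ζ^k is a Liouville number. -/
open Filter

theorem Irrational.pow_ne_ratCast_pow {x : ℝ} (hx : Irrational x) (q : ℚ) {k : ℕ} (hk : k ≠ 0) :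
    x ^ k ≠ (q : ℝ) ^ k := by
  rw [Ne, pow_eq_pow_iff_of_ne_zero hk]
  rintro (h | ⟨h, -⟩)
  · exact hx.ne_rat q h
  · exact hx.ne_rat (-q) (by rw [h, Rat.cast_neg])

namespace LiouvilleWith

variable {p x : ℝ} {k : ℕ}

/-- Approximations `m / n` of `x` give approximations `m ^ k / n ^ k` of `x ^ k`, with the error
multiplied by a bounded Lipschitz constant of `t ↦ t ^ k` near `x`. -/
theorem pow (h : LiouvilleWith p x) (hk : k ≠ 0) : LiouvilleWith (p / k) (x ^ k) := by
  rcases le_or_gt (p / k) 1 with hle | hpk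
  · exact (liouvilleWith_one _).mono hle
  have hk₀ : (0 : ℝ) < k := by positivity
  have hp : 1 < p := by
    have : (1 : ℝ) ≤ k := by exact_mod_cast Nat.one_le_iff_ne_zero.mpr hk
    rw [lt_div_iff₀ hk₀] at hpk
    linarith
  obtain ⟨C, hC₀, hC⟩ := h.exists_pos
  refine ⟨k * (|x| + C) ^ (k - 1) * C, (tendsto_pow_atTop hk).frequently (hC.mono ?_)⟩
  rintro n ⟨hn, m, -, hlt⟩
  have hn₁ : (1 : ℝ) ≤ n := by exact_mod_cast hn
  have hcast : ((m ^ k : ℤ) : ℝ) / ((n ^ k : ℕ) : ℝ) = ((m / n : ℚ) : ℝ) ^ k := by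
    push_cast
    rw [div_pow]
  have hclose : |x - m / n| < C :=
    hlt.trans_le (div_le_self hC₀.le (Real.one_le_rpow hn₁ (by linarith)))
  have hmax : max |x| |(m : ℝ) / n| ≤ |x| + C := by
    refine max_le (by linarith) ?_
    linarith [abs_sub_abs_le_abs_sub ((m : ℝ) / n) x, abs_sub_comm ((m : ℝ) / n) x]
  refine ⟨m ^ k, hcast ▸ (h.irrational hp).pow_ne_ratCast_pow _ hk, ?_⟩
  rw [hcast, Rat.cast_div, Rat.cast_intCast, Rat.cast_natCast]
  calc |x ^ k - (m / n : ℝ) ^ k| ≤ |x - m / n| * k * max |x| |(m : ℝ) / n| ^ (k - 1) :=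
        abs_pow_sub_pow_le ..
    _ ≤ |x - m / n| * k * (|x| + C) ^ (k - 1) := by gcongr
    _ < C / n ^ p * k * (|x| + C) ^ (k - 1) := by gcongr
    _ = k * (|x| + C) ^ (k - 1) * C / ((n ^ k : ℕ) : ℝ) ^ (p / k) := by
        rw [Nat.cast_pow, ← Real.rpow_natCast (n : ℝ) k, ← Real.rpow_mul (by positivity),
          mul_div_cancel₀ _ hk₀.ne']
        ring

end LiouvilleWith

theorem liouville_pow (ζ : ℝ) (hζ : Liouville ζ) (k : ℕ) (hk : 0 < k) :
    Liouville (ζ ^ k) :=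
  forall_liouvilleWith_iff.mp fun p => by
    simpa [mul_div_cancel_right₀ p (Nat.cast_ne_zero.mpr hk.ne')] using
      (hζ.liouvilleWith (p * k)).pow hk.ne'
end

section
/- Suppose f is a non-constant real analytic function on an open interval I with f(ℚ ∩ I) ⊆ ℚ, and suppose there is a constant η such that whenever p/q ∈ I is in lowest terms with q ≥ 2 and f(p/q) = p'/q' in lowest terms, one has q' ≤ q^η. Then f maps every Liouville number in I to a Liouville number. -/
theorem analytic_rational_preserving_maps_liouville
    (a b : ℝ) (hab : a < b) (f : ℝ → ℝ)
    (hf : AnalyticOnNhd ℝ f (Set.Ioo a b))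
    (hnc : ¬∃ c : ℝ, ∀ x ∈ Set.Ioo a b, f x = c)
    (hQ : ∀ r : ℚ, (r : ℝ) ∈ Set.Ioo a b → ∃ r' : ℚ, f r = r')
    (η : ℝ)
    (hη : ∀ r r' : ℚ, (r : ℝ) ∈ Set.Ioo a b → 2 ≤ r.den → f r = r' →
      (r'.den : ℝ) ≤ (r.den : ℝ) ^ η)
    (ζ : ℝ) (hζI : ζ ∈ Set.Ioo a b) (hζ : Liouville ζ) :
    Liouville (f ζ) := by
  have hirr : Irrational ζ := hζ.irrational
  obtain ⟨hζa, hζb⟩ := hζI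
  have hζI' : ζ ∈ Set.Ioo a b := ⟨hζa, hζb⟩
  -- Lipschitz-type bound near ζ
  obtain ⟨C, hC0, hCb⟩ := ((hf ζ hζI').differentiableAt.isBigO_sub).exists_pos
  have hCb' : ∀ᶠ x in nhds ζ, |f x - f ζ| ≤ C * |x - ζ| := by
    simpa [Real.norm_eq_abs] using hCb.bound
  obtain ⟨δ₁, hδ₁, hlip⟩ := Metric.eventually_nhds_iff.mp hCb'
  -- f ≠ f ζ on a punctured neighborhood
  have hne : ∀ᶠ x in nhdsWithin ζ {ζ}ᶜ, f x ≠ f ζ := by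
    rcases (hf ζ hζI').eventually_eq_or_eventually_ne analyticAt_const with h | h
    · exact absurd ⟨f ζ, fun x hx =>
        hf.eqOn_of_preconnected_of_eventuallyEq (fun z _ => analyticAt_const)
          isPreconnected_Ioo hζI' h hx⟩ hnc
    · exact h
  obtain ⟨δ₂, hδ₂, hnear⟩ := Metric.mem_nhdsWithin_iff.mp hne
  -- distance from ζ to the integers
  set δ₄ : ℝ := min (Int.fract ζ) (1 - Int.fract ζ) with hδ₄def
  have hfr0 : 0 < Int.fract ζ := by
    rcases (Int.fract_nonneg ζ).lt_or_eq with h | h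
    · exact h
    · exfalso
      apply hirr.ne_int ⌊ζ⌋
      have := Int.fract ζ
      unfold Int.fract at h
      linarith
  have hfr1 : Int.fract ζ < 1 := Int.fract_lt_one ζ
  have hδ₄pos : 0 < δ₄ := lt_min hfr0 (by linarith)
  have hδ₄int : ∀ k : ℤ, δ₄ ≤ |ζ - k| := by
    intro k
    have hfl : Int.fract ζ = ζ - ⌊ζ⌋ := rfl
    rcases le_or_gt (k : ℝ) ζ with h | h
    · have hk : k ≤ ⌊ζ⌋ := Int.le_floor.mpr h
      have hk' : (k : ℝ) ≤ (⌊ζ⌋ : ℝ) := by exact_mod_cast hk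
      rw [abs_of_nonneg (by linarith)]
      have := min_le_left (Int.fract ζ) (1 - Int.fract ζ)
      linarith
    · have hk : ⌊ζ⌋ + 1 ≤ k := by
        have : ⌊ζ⌋ < k := by
          have : (⌊ζ⌋ : ℝ) < k := (Int.floor_le ζ).trans_lt h
          exact_mod_cast this
        omega
      have hk' : (⌊ζ⌋ : ℝ) + 1 ≤ (k : ℝ) := by exact_mod_cast hk
      rw [abs_of_nonpos (by linarith), neg_sub]
      have := min_le_right (Int.fract ζ) (1 - Int.fract ζ)
      linarith
  set δ : ℝ := min (min δ₁ δ₂) (min (min (ζ - a) (b - ζ)) δ₄) with hδdef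
  have hδpos : 0 < δ :=
    lt_min (lt_min hδ₁ hδ₂) (lt_min (lt_min (by linarith) (by linarith)) hδ₄pos)
  have hd1 : δ ≤ δ₁ := (min_le_left _ _).trans (min_le_left _ _)
  have hd2 : δ ≤ δ₂ := (min_le_left _ _).trans (min_le_right _ _)
  have hda : δ ≤ ζ - a := (min_le_right _ _).trans ((min_le_left _ _).trans (min_le_left _ _))
  have hdb : δ ≤ b - ζ := (min_le_right _ _).trans ((min_le_left _ _).trans (min_le_right _ _))
  have hd4 : δ ≤ δ₄ := (min_le_right _ _).trans (min_le_right _ _)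
  intro n
  set e : ℕ := ⌈η⌉₊ with hedef
  obtain ⟨j, hj⟩ := pow_unbounded_of_one_lt C (one_lt_two : (1:ℝ) < 2)
  obtain ⟨j', hj'⟩ := pow_unbounded_of_one_lt δ⁻¹ (one_lt_two : (1:ℝ) < 2)
  set m : ℕ := n * (e + 1) + j + j' with hmdef
  obtain ⟨p, q, hq1, hne₀, happ⟩ := hζ m
  have hq0 : (0:ℤ) < q := by omega
  have hq2 : (2:ℝ) ≤ (q:ℝ) := by exact_mod_cast hq1
  have hq0' : (0:ℝ) < (q:ℝ) := by linarith
  set r : ℚ := (p : ℚ) / (q : ℚ) with hrdef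
  have hr : ((r : ℚ) : ℝ) = (p : ℝ) / (q : ℝ) := by
    rw [hrdef]; push_cast; ring
  have hqm : (2:ℝ)^m ≤ (q:ℝ)^m := pow_le_pow_left₀ (by norm_num) hq2 m
  have hqmpos : (0:ℝ) < (q:ℝ)^m := by positivity
  have herr : |ζ - (r:ℝ)| < 1 / (q:ℝ)^m := by rw [hr]; exact happ
  have h2m : (2:ℝ)^j' ≤ (2:ℝ)^m := by
    apply pow_le_pow_right₀ (by norm_num)
    omega
  have herr2 : |ζ - (r:ℝ)| < δ := by
    have h1 : (1:ℝ) / (q:ℝ)^m ≤ 1 / (2:ℝ)^m := by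
      apply one_div_le_one_div_of_le (by positivity) hqm
    have h2 : (1:ℝ) / (2:ℝ)^m ≤ 1 / (2:ℝ)^j' := by
      apply one_div_le_one_div_of_le (by positivity) h2m
    have h3 : (1:ℝ) / (2:ℝ)^j' < δ := by
      rw [div_lt_iff₀ (by positivity)]
      rw [← div_lt_iff₀' hδpos]
      simpa [div_eq_mul_inv, one_mul] using hj'
    linarith
  have hrI : ((r : ℚ) : ℝ) ∈ Set.Ioo a b := by
    rcases abs_lt.mp herr2 with ⟨hl, hu⟩
    constructor <;> [linarith [hda]; linarith [hdb]]
  have hrne : ((r : ℚ) : ℝ) ≠ ζ := fun h => hirr ⟨r, h⟩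
  -- denominator of r is at least 2
  have hden2 : 2 ≤ r.den := by
    by_contra h
    push_neg at h
    have hd1' : r.den = 1 := by have := r.pos; omega
    have hnum : ((r.num : ℝ)) = (r : ℝ) := by
      have := Rat.coe_int_num_of_den_eq_one hd1'
      exact_mod_cast congrArg (fun x : ℚ => (x : ℝ)) this
    have h4 : δ₄ ≤ |ζ - (r:ℝ)| := hnum ▸ hδ₄int r.num
    linarith [herr2.trans_le hd4]
  -- r.den ≤ q
  have hdenq : (r.den : ℝ) ≤ (q:ℝ) := by
    have hdvd := Rat.den_dvd p q
    rw [Rat.divInt_eq_div] at hdvd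
    have : (r.den : ℤ) ≤ q := Int.le_of_dvd hq0 (by rwa [hrdef])
    exact_mod_cast this
  obtain ⟨r', hfr⟩ := hQ r hrI
  have hq'bound : (r'.den : ℝ) ≤ (q:ℝ)^e := by
    have h1 : (r'.den : ℝ) ≤ (r.den : ℝ) ^ η := hη r r' hrI hden2 hfr
    have hrd1 : (1:ℝ) ≤ (r.den : ℝ) := by exact_mod_cast r.pos
    have h2 : (r.den : ℝ) ^ η ≤ (r.den : ℝ) ^ (e : ℝ) :=
      Real.rpow_le_rpow_of_exponent_le hrd1 (Nat.le_ceil η)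
    have h3 : (r.den : ℝ) ^ (e : ℝ) = (r.den : ℝ) ^ e := Real.rpow_natCast _ _
    have h4 : (r.den : ℝ) ^ e ≤ (q:ℝ) ^ e := pow_le_pow_left₀ (by positivity) hdenq e
    linarith [h1.trans (h2.trans_eq h3)]
  refine ⟨2 * r'.num, 2 * (r'.den : ℤ), ?_, ?_, ?_⟩
  · have := r'.pos; omega
  · -- f ζ ≠ r'
    have hcoe : ((2 * r'.num : ℤ) : ℝ) / ((2 * (r'.den : ℤ) : ℤ) : ℝ) = (r' : ℝ) := by
      have hd : (r'.den : ℝ) ≠ 0 := by positivity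
      push_cast
      rw [mul_div_mul_left _ _ (two_ne_zero)]
      rw [Rat.cast_def]
    rw [hcoe]
    intro hcontra
    have hfrne : f r ≠ f ζ := by
      apply hnear
      refine ⟨Metric.mem_ball.mpr ?_, hrne⟩
      rw [Real.dist_eq, ← abs_sub_comm]
      exact herr2.trans_le hd2
    exact hfrne (hfr.trans (hcontra.symm))
  · -- the bound
    have hcoe : ((2 * r'.num : ℤ) : ℝ) / ((2 * (r'.den : ℤ) : ℤ) : ℝ) = (r' : ℝ) := by
      push_cast
      rw [mul_div_mul_left _ _ (two_ne_zero)]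
      rw [Rat.cast_def]
    rw [hcoe]
    have hlip' : |f ζ - (r' : ℝ)| ≤ C * |ζ - (r:ℝ)| := by
      have := hlip (y := ((r:ℚ):ℝ)) (by rw [Real.dist_eq, ← abs_sub_comm]; exact herr2.trans_le hd1)
      rw [hfr] at this
      calc |f ζ - (r' : ℝ)| = |(r' : ℝ) - f ζ| := abs_sub_comm _ _
        _ ≤ C * |(r:ℝ) - ζ| := this
        _ = C * |ζ - (r:ℝ)| := by rw [abs_sub_comm]
    have hstep : C * |ζ - (r:ℝ)| < C * (1 / (q:ℝ)^m) := by
      exact mul_lt_mul_of_pos_left herr hC0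
    -- key: C * (2 * r'.den)^n ≤ q^m
    have hb'pos : (0:ℝ) < 2 * (r'.den : ℝ) := by positivity
    have hkey : C * (2 * (r'.den : ℝ))^n ≤ (q:ℝ)^m := by
      have h1 : (2 * (r'.den : ℝ))^n ≤ ((q:ℝ) * (q:ℝ)^e)^n := by
        apply pow_le_pow_left₀ (by positivity)
        have : (2:ℝ) * (r'.den : ℝ) ≤ (q:ℝ) * (q:ℝ)^e := by
          apply mul_le_mul hq2 hq'bound (by positivity) (by linarith)
        exact this
      have h2 : ((q:ℝ) * (q:ℝ)^e)^n = (q:ℝ)^(n * (e+1)) := by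
        rw [← pow_succ'  ]
        rw [← pow_mul]
        ring_nf
      have h3 : C ≤ (q:ℝ)^j := by
        calc C ≤ (2:ℝ)^j := hj.le
          _ ≤ (q:ℝ)^j := pow_le_pow_left₀ (by norm_num) hq2 j
      calc C * (2 * (r'.den : ℝ))^n ≤ (q:ℝ)^j * (q:ℝ)^(n*(e+1)) := by
            apply mul_le_mul h3 (h1.trans_eq h2) (by positivity) (by positivity)
        _ = (q:ℝ)^(n*(e+1) + j) := by rw [← pow_add]; ring_nf
        _ ≤ (q:ℝ)^m := by
            apply pow_le_pow_right₀ (by linarith)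
            omega
    have hfin : C * (1 / (q:ℝ)^m) ≤ 1 / (2 * (r'.den : ℝ))^n := by
      rw [mul_one_div, div_le_div_iff₀ hqmpos (by positivity)]
      linarith [hkey]
    have hcast : ((2 * (r'.den : ℤ) : ℤ) : ℝ) = 2 * (r'.den : ℝ) := by push_cast; ring
    rw [hcast]
    linarith [hlip'.trans_lt (hstep.trans_le hfin)]
end

section
/- Let α be a real number and P(z) = Σ_{j=0}^m (a_j/b_j) z^j a polynomial with rational coefficients a_j/b_j in lowest terms, A = max_j |a_j|, B = lcm(|b_0|,…,|b_m|). If a positive integer q satisfies ‖qα‖ ≤ q^{-ν} ≤ 1 (distance to nearest integer), then ‖B q^m · P(α)‖ ≤ m²(1+|α|)^{m-1} · A B · q^{-ν+m-1}. -/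
/-!
Write `x = qα` and let `p` be the nearest integer to `x`. Clearing denominators, `B q^m P(α)` is the
homogenised integer form `∑ e_j q^(m-j) x^j` with `|e_j| ≤ AB`; replacing `x` by `p` gives an integer,
and since `|x|, |p| ≤ q(1 + |α|)` each monomial moves by at most `j (q(1+|α|))^(j-1) ‖qα‖`.
-/

open Finset

lemma abs_round_natCast_mul_le (q : ℕ) (α : ℝ) :
    |(round ((q : ℝ) * α) : ℝ)| ≤ q * (1 + |α|) := by
  rcases Nat.eq_zero_or_pos q with rfl | hq
  · simp
  have hq' : (1 : ℝ) ≤ q := by exact_mod_cast hq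
  have hround := abs_sub_round ((q : ℝ) * α)
  have hx : |(q : ℝ) * α| = q * |α| := by rw [abs_mul, Nat.abs_cast]
  have := abs_sub_abs_le_abs_sub (round ((q : ℝ) * α) : ℝ) ((q : ℝ) * α)
  rw [abs_sub_comm] at hround
  linarith

lemma pow_mul_abs_pow_sub_round_pow_le (q : ℕ) (α : ℝ) {j m : ℕ} (hjm : j ≤ m) :
    (q : ℝ) ^ (m - j) * |((q : ℝ) * α) ^ j - (round ((q : ℝ) * α) : ℝ) ^ j| ≤
      j * (1 + |α|) ^ (m - 1) * (q : ℝ) ^ (m - 1) * |(q : ℝ) * α - round ((q : ℝ) * α)| := by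
  rcases Nat.eq_zero_or_pos j with rfl | hj
  · simp
  set x : ℝ := (q : ℝ) * α
  have hmax : max |x| |(round x : ℝ)| ≤ q * (1 + |α|) := by
    refine max_le ?_ (abs_round_natCast_mul_le q α)
    rw [abs_mul, Nat.abs_cast]
    gcongr
    linarith
  have hexp : (q : ℝ) ^ (m - j) * (q * (1 + |α|)) ^ (j - 1) =
      (1 + |α|) ^ (j - 1) * (q : ℝ) ^ (m - 1) := by
    rw [mul_pow, ← mul_assoc, ← pow_add, Nat.sub_add_sub_cancel hjm hj, mul_comm]
  calc (q : ℝ) ^ (m - j) * |x ^ j - (round x : ℝ) ^ j|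
      ≤ (q : ℝ) ^ (m - j) * (|x - round x| * j * (q * (1 + |α|)) ^ (j - 1)) := by
        gcongr
        exact (abs_pow_sub_pow_le x _ j).trans (by gcongr)
    _ = j * ((1 + |α|) ^ (j - 1) * (q : ℝ) ^ (m - 1)) * |x - round x| := by
        rw [← hexp]; ring
    _ ≤ j * ((1 + |α|) ^ (m - 1) * (q : ℝ) ^ (m - 1)) * |x - round x| := by
        gcongr
        exact le_add_of_nonneg_right (abs_nonneg α)
    _ = _ := by ring

lemma sum_range_succ_natCast_le_sq (m : ℕ) : ∑ j ∈ range (m + 1), (j : ℝ) ≤ (m : ℝ) ^ 2 := by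
  rw [sum_range_succ', sq]
  calc ∑ i ∈ range m, ((i + 1 : ℕ) : ℝ) + ((0 : ℕ) : ℝ) ≤ ∑ _i ∈ range m, (m : ℝ) + 0 := by
        gcongr with i hi
        · exact_mod_cast mem_range.mp hi
        · simp
    _ = m * m := by simp

lemma abs_pow_mul_sum_sub_round_le (α : ℝ) (m : ℕ) (e : ℕ → ℤ) (E : ℝ)
    (he : ∀ j ≤ m, |(e j : ℝ)| ≤ E) (q : ℕ) :
    |(q : ℝ) ^ m * ∑ j ∈ range (m + 1), (e j : ℝ) * α ^ j -
        round ((q : ℝ) ^ m * ∑ j ∈ range (m + 1), (e j : ℝ) * α ^ j)| ≤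
      (m : ℝ) ^ 2 * (1 + |α|) ^ (m - 1) * E * (q : ℝ) ^ (m - 1) *
        |(q : ℝ) * α - round ((q : ℝ) * α)| := by
  set x : ℝ := (q : ℝ) * α
  set p : ℤ := round x
  set K : ℝ := (1 + |α|) ^ (m - 1) * E * (q : ℝ) ^ (m - 1) * |x - p|
  have hK : 0 ≤ K := by
    have : 0 ≤ E := (abs_nonneg _).trans (he 0 m.zero_le)
    positivity
  set N : ℤ := ∑ j ∈ range (m + 1), e j * (q : ℤ) ^ (m - j) * p ^ j
  have hhom : (q : ℝ) ^ m * ∑ j ∈ range (m + 1), (e j : ℝ) * α ^ j - N =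
      ∑ j ∈ range (m + 1), (e j : ℝ) * ((q : ℝ) ^ (m - j) * (x ^ j - (p : ℝ) ^ j)) := by
    simp only [N, mul_sum]
    push_cast
    rw [← sum_sub_distrib]
    refine sum_congr rfl fun j hj => ?_
    rw [← Nat.sub_add_cancel (Nat.le_of_lt_succ (mem_range.mp hj)), pow_add]
    simp only [x, Nat.add_sub_cancel]
    ring
  have hterm : ∀ j ∈ range (m + 1),
      |(e j : ℝ) * ((q : ℝ) ^ (m - j) * (x ^ j - (p : ℝ) ^ j))| ≤ j * K := by
    intro j hj
    have hjm := Nat.le_of_lt_succ (mem_range.mp hj)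
    rw [abs_mul, abs_mul, abs_pow, Nat.abs_cast]
    calc |(e j : ℝ)| * ((q : ℝ) ^ (m - j) * |x ^ j - (p : ℝ) ^ j|)
        ≤ E * (j * (1 + |α|) ^ (m - 1) * (q : ℝ) ^ (m - 1) * |x - p|) := by
          exact mul_le_mul (he j hjm) (pow_mul_abs_pow_sub_round_pow_le q α hjm)
            (by positivity) ((abs_nonneg _).trans (he 0 m.zero_le))
      _ = j * K := by ring
  calc _ ≤ |(q : ℝ) ^ m * ∑ j ∈ range (m + 1), (e j : ℝ) * α ^ j - N| := round_le _ N
    _ ≤ ∑ j ∈ range (m + 1), (j : ℝ) * K := by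
        rw [hhom]
        exact (abs_sum_le_sum_abs _ _).trans (sum_le_sum hterm)
    _ ≤ (m : ℝ) ^ 2 * K := by
        rw [← sum_mul]
        exact mul_le_mul_of_nonneg_right (sum_range_succ_natCast_le_sq m) hK
    _ = _ := by ring

lemma intCast_mul_div_of_dvd {b B : ℤ} (h : b ∣ B) (a : ℤ) :
    (B : ℝ) * (a / b) = ((B / b * a : ℤ) : ℝ) := by
  obtain ⟨k, rfl⟩ := h
  rcases eq_or_ne b 0 with rfl | hb
  · simp
  rw [Int.mul_ediv_cancel_left _ hb]
  push_cast
  field_simp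

lemma mul_sum_div_mul_pow_eq {s : Finset ℕ} {a b : ℕ → ℤ} {B : ℤ} (h : ∀ j ∈ s, b j ∣ B) (x : ℝ) :
    (B : ℝ) * ∑ j ∈ s, (a j / b j : ℝ) * x ^ j = ∑ j ∈ s, ((B / b j * a j : ℤ) : ℝ) * x ^ j := by
  rw [mul_sum]
  refine sum_congr rfl fun j hj => ?_
  rw [← mul_assoc, intCast_mul_div_of_dvd (h j hj)]

lemma abs_ediv_mul_le (B : ℕ) (b a : ℤ) {A : ℕ} (ha : a.natAbs ≤ A) : |(B : ℤ) / b * a| ≤ A * B :=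
  calc |(B : ℤ) / b * a| = |(B : ℤ) / b| * |a| := abs_mul _ _
    _ ≤ |(B : ℤ)| * A := mul_le_mul (Int.abs_ediv_le_abs _ _)
        (by rw [Int.abs_eq_natAbs]; exact_mod_cast ha) (abs_nonneg _) (abs_nonneg _)
    _ = A * B := by rw [Nat.abs_cast, mul_comm]

lemma sq_mul_pow_sub_one_mul_rpow_le (m q : ℕ) (ν : ℝ) :
    (m : ℝ) ^ 2 * (q : ℝ) ^ (m - 1) * (q : ℝ) ^ (-ν) ≤ (m : ℝ) ^ 2 * (q : ℝ) ^ (-ν + m - 1) := by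
  rcases Nat.eq_zero_or_pos m with rfl | hm
  · simp
  rw [mul_assoc]
  refine mul_le_mul_of_nonneg_left ?_ (by positivity)
  calc (q : ℝ) ^ (m - 1) * (q : ℝ) ^ (-ν) = (q : ℝ) ^ ((m : ℝ) - 1) * (q : ℝ) ^ (-ν) := by
        rw [← Real.rpow_natCast, Nat.cast_sub hm, Nat.cast_one]
    _ ≤ (q : ℝ) ^ ((m : ℝ) - 1 + -ν) := Real.le_rpow_add q.cast_nonneg _ _
    _ = (q : ℝ) ^ (-ν + m - 1) := by ring_nf

theorem polynomial_linear_form_estimate_general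
    (α : ℝ) (m : ℕ) (a : ℕ → ℤ) (b : ℕ → ℤ)
    (A B : ℕ)
    (hA : A = (Finset.range (m + 1)).sup fun j => (a j).natAbs)
    (hB : B = (Finset.range (m + 1)).lcm fun j => (b j).natAbs)
    (q : ℕ) (ν : ℝ)
    (h1 : |(q : ℝ) * α - round ((q : ℝ) * α)| ≤ (q : ℝ) ^ (-ν)) :
    |(B : ℝ) * (q : ℝ) ^ m * (∑ j ∈ Finset.range (m + 1), ((a j : ℝ) / (b j : ℝ)) * α ^ j) -
        round ((B : ℝ) * (q : ℝ) ^ m * (∑ j ∈ Finset.range (m + 1), ((a j : ℝ) / (b j : ℝ)) * α ^ j))| ≤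
      (m : ℝ) ^ 2 * (1 + |α|) ^ (m - 1) * (A : ℝ) * (B : ℝ) * (q : ℝ) ^ (-ν + (m : ℝ) - 1) := by
  have hdvd : ∀ j ∈ range (m + 1), b j ∣ (B : ℤ) := fun j hj =>
    Int.natAbs_dvd.mp (Int.natCast_dvd_natCast.mpr (hB ▸ dvd_lcm hj))
  have hcoeff : ∀ j ≤ m, |(((B : ℤ) / b j * a j : ℤ) : ℝ)| ≤ A * B := fun j hj => by
    exact_mod_cast abs_ediv_mul_le B (b j) (a j)
      (hA ▸ le_sup (f := fun j => (a j).natAbs) (mem_range.mpr (Nat.lt_succ_of_le hj)))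
  rw [mul_comm (B : ℝ), mul_assoc, ← Int.cast_natCast B, mul_sum_div_mul_pow_eq hdvd, Int.cast_natCast]
  calc _ ≤ (m : ℝ) ^ 2 * (1 + |α|) ^ (m - 1) * (A * B) * (q : ℝ) ^ (m - 1) *
          |(q : ℝ) * α - round ((q : ℝ) * α)| := abs_pow_mul_sum_sub_round_le α m _ _ hcoeff q
    _ ≤ (m : ℝ) ^ 2 * (1 + |α|) ^ (m - 1) * (A * B) * (q : ℝ) ^ (m - 1) * (q : ℝ) ^ (-ν) := by
        gcongr
    _ = (1 + |α|) ^ (m - 1) * A * B * ((m : ℝ) ^ 2 * (q : ℝ) ^ (m - 1) * (q : ℝ) ^ (-ν)) := by ring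
    _ ≤ (1 + |α|) ^ (m - 1) * A * B * ((m : ℝ) ^ 2 * (q : ℝ) ^ (-ν + m - 1)) := by
        exact mul_le_mul_of_nonneg_left (sq_mul_pow_sub_one_mul_rpow_le m q ν) (by positivity)
    _ = _ := by ring

theorem polynomial_linear_form_estimate
    (α : ℝ) (m : ℕ) (a : ℕ → ℤ) (b : ℕ → ℤ)
    (hb : ∀ j ≤ m, b j ≠ 0)
    (hcop : ∀ j ≤ m, Int.gcd (a j) (b j) = 1)
    (A B : ℕ)
    (hA : A = (Finset.range (m + 1)).sup fun j => (a j).natAbs)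
    (hB : B = (Finset.range (m + 1)).lcm fun j => (b j).natAbs)
    (q : ℕ) (hq : 0 < q) (ν : ℝ)
    (h1 : |(q : ℝ) * α - round ((q : ℝ) * α)| ≤ (q : ℝ) ^ (-ν))
    (h2 : (q : ℝ) ^ (-ν) ≤ 1) :
    |(B : ℝ) * (q : ℝ) ^ m * (∑ j ∈ Finset.range (m + 1), ((a j : ℝ) / (b j : ℝ)) * α ^ j) -
        round ((B : ℝ) * (q : ℝ) ^ m * (∑ j ∈ Finset.range (m + 1), ((a j : ℝ) / (b j : ℝ)) * α ^ j))| ≤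
      (m : ℝ) ^ 2 * (1 + |α|) ^ (m - 1) * (A : ℝ) * (B : ℝ) * (q : ℝ) ^ (-ν + (m : ℝ) - 1) :=
  polynomial_linear_form_estimate_general α m a b A B hA hB q ν h1
end

section
/- For an irrational real number α with continued fraction convergents s_n/t_n, one has: limsup_{n→∞} (log t_{n+1})/(log t_n) = ∞ if and only if α is a Liouville number. -/
/-!
Write `pₙ/qₙ` for the convergents of `α`. They satisfy
`1 / (qₙ (qₙ + qₙ₊₁)) < |α - pₙ/qₙ| ≤ 1 / (qₙ qₙ₊₁)`,
so how well `pₙ/qₙ` approximates `α` is governed by the size of `qₙ₊₁` against `qₙ`; and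
`log qₙ₊₁ / log qₙ` is unbounded exactly when `qₙ^k < qₙ₊₁` infinitely often for every `k`.
This gives Liouville approximations from large ratios. Conversely, a Liouville approximation `m/d`
is itself a convergent: taking `n` with `qₙ < 2d ≤ qₙ₊₁`, both `m/d` and `pₙ/qₙ` lie within
`1/(2 d qₙ)` of `α`, whereas distinct fractions with denominators `d` and `qₙ` are `1/(d qₙ)` apart.
-/

open Filter Real

namespace GenContFract

variable {K : Type*} [Field K] [LinearOrder K] [FloorRing K]

theorem exists_int_eq_contsAux (v : K) :
    ∀ n, (∃ a : ℤ, ((GenContFract.of v).contsAux n).a = a) ∧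
      ∃ b : ℤ, ((GenContFract.of v).contsAux n).b = b
  | 0 => ⟨⟨1, by simp [zeroth_contAux_eq_one_zero]⟩, ⟨0, by simp [zeroth_contAux_eq_one_zero]⟩⟩
  | 1 => ⟨⟨⌊v⌋, by simp [first_contAux_eq_h_one]⟩, ⟨1, by simp [first_contAux_eq_h_one]⟩⟩
  | n + 2 => by
    obtain ⟨⟨a₀, ha₀⟩, ⟨b₀, hb₀⟩⟩ := exists_int_eq_contsAux v n
    obtain ⟨⟨a₁, ha₁⟩, ⟨b₁, hb₁⟩⟩ := exists_int_eq_contsAux v (n + 1)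
    cases hs : (GenContFract.of v).s.get? n with
    | none => rw [contsAux_stable_step_of_terminated hs]; exact ⟨⟨a₁, ha₁⟩, ⟨b₁, hb₁⟩⟩
    | some gp =>
      have hgp_a : gp.a = 1 := of_partNum_eq_one (partNum_eq_s_a hs)
      obtain ⟨z, hgp_b⟩ := exists_int_eq_of_partDen (partDen_eq_s_b hs)
      rw [contsAux_recurrence hs rfl rfl]
      exact ⟨⟨z * a₁ + a₀, by simp [hgp_a, hgp_b, ha₀, ha₁]⟩,
        ⟨z * b₁ + b₀, by simp [hgp_a, hgp_b, hb₀, hb₁]⟩⟩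

theorem exists_int_eq_nums (v : K) (n : ℕ) : ∃ a : ℤ, (GenContFract.of v).nums n = a :=
  (exists_int_eq_contsAux v (n + 1)).1

theorem exists_int_eq_dens (v : K) (n : ℕ) : ∃ b : ℤ, (GenContFract.of v).dens n = b :=
  (exists_int_eq_contsAux v (n + 1)).2

variable [IsStrictOrderedRing K] {v : K} {n : ℕ}

theorem one_le_dens (h : ¬(GenContFract.of v).Terminates) (n : ℕ) :
    1 ≤ (GenContFract.of v).dens n :=
  (succ_nth_fib_le_of_nth_den (Or.inr fun ht => h ⟨_, ht⟩)).trans'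
    (by exact_mod_cast Nat.fib_pos.2 n.succ_pos)

theorem one_lt_dens (h : ¬(GenContFract.of v).Terminates) (hn : 2 ≤ n) :
    1 < (GenContFract.of v).dens n := by
  have hfib : 1 < Nat.fib (n + 1) := (Nat.fib_mono (show 3 ≤ n + 1 by omega)).trans_lt' (by decide)
  exact (succ_nth_fib_le_of_nth_den (Or.inr fun ht => h ⟨_, ht⟩)).trans_lt' (by exact_mod_cast hfib)

theorem exists_le_dens (h : ¬(GenContFract.of v).Terminates) (y : K) :
    ∃ n, y ≤ (GenContFract.of v).dens n := by
  refine ⟨⌈y⌉₊ + 5, (Nat.le_ceil y).trans ?_⟩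
  refine le_trans ?_ (succ_nth_fib_le_of_nth_den (Or.inr fun ht => h ⟨_, ht⟩))
  exact_mod_cast (le_add_right le_rfl).trans
    ((Nat.le_fib_self (by omega)).trans Nat.fib_le_fib_succ)

theorem one_div_lt_abs_sub_convs (h : ¬(GenContFract.of v).TerminatedAt n) :
    1 / ((GenContFract.of v).dens n *
        ((GenContFract.of v).dens n + (GenContFract.of v).dens (n + 1))) <
      |v - (GenContFract.of v).convs n| := by
  obtain ⟨gp, hs⟩ := Option.ne_none_iff_exists'.1 h
  obtain ⟨ifp', hstream', hgp_b⟩ :=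
    IntFractPair.exists_succ_get?_stream_of_gcf_of_get?_eq_some hs
  obtain ⟨ifp, hstream, hfr, rfl⟩ := IntFractPair.succ_nth_stream_eq_some_iff.1 hstream'
  set B := ((GenContFract.of v).contsAux (n + 1)).b
  set pB := ((GenContFract.of v).contsAux n).b
  have hdens : (GenContFract.of v).dens n = B := by
    rw [den_eq_conts_b, nth_cont_eq_succ_nth_contAux]
  have hdens_succ : (GenContFract.of v).dens (n + 1) = gp.b * B + pB := by
    rw [den_eq_conts_b, nth_cont_eq_succ_nth_contAux, contsAux_recurrence hs rfl rfl,
      of_partNum_eq_one (partNum_eq_s_a hs)]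
    exact congrArg (gp.b * B + ·) (one_mul pB)
  have hB : 0 < B := hdens ▸
    (succ_nth_fib_le_of_nth_den (Or.inr (mt (terminated_stable n.pred_le) h))).trans_lt'
      (by exact_mod_cast Nat.fib_pos.2 n.succ_pos)
  have hpB : 0 ≤ pB := zero_le_of_contsAux_b
  have hfr_pos : 0 < ifp.fr := (IntFractPair.nth_stream_fr_nonneg hstream).lt_of_ne' hfr
  -- `gp.b = ⌊ifp.fr⁻¹⌋`
  have hfr_inv : ifp.fr⁻¹ < gp.b + 1 := hgp_b ▸ Int.lt_floor_add_one _
  have hsub : |v - (GenContFract.of v).convs n| = 1 / (B * (ifp.fr⁻¹ * B + pB)) := by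
    have := sub_convs_eq hstream
    simp only [hfr, if_false] at this
    rw [this, abs_div, abs_neg_one_pow, abs_of_pos (by positivity)]
  rw [hsub, hdens_succ, hdens]
  have := mul_lt_mul_of_pos_right hfr_inv hB
  exact one_div_lt_one_div_of_lt (by positivity) (mul_lt_mul_of_pos_left (by linarith) hB)

end GenContFract

theorem exists_lt_and_le_succ {α : Type*} [LinearOrder α] {f : ℕ → α} {y : α} (h₀ : f 0 < y)
    (hy : ∃ n, y ≤ f n) : ∃ n, f n < y ∧ y ≤ f (n + 1) := by
  classical
  have hpos : Nat.find hy ≠ 0 := fun h => (Nat.find_spec hy).not_gt (h ▸ h₀)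
  refine ⟨Nat.find hy - 1, not_le.1 (Nat.find_min hy (by omega)), ?_⟩
  rw [Nat.sub_add_cancel (Nat.one_le_iff_ne_zero.2 hpos)]
  exact Nat.find_spec hy

theorem div_eq_div_of_abs_sub_add_abs_sub_lt {K : Type*} [Field K] [LinearOrder K]
    [IsStrictOrderedRing K] {x : K} {a b c d : ℤ} (hb : 0 < b) (hd : 0 < d)
    (h : |x - a / b| + |x - c / d| < 1 / (b * d)) : (a / b : K) = c / d := by
  have hb' : (0 : K) < b := by exact_mod_cast hb
  have hd' : (0 : K) < d := by exact_mod_cast hd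
  by_contra hne
  have hcross : a * d - b * c ≠ 0 := fun h0 => hne <| by
    rw [div_eq_div_iff hb'.ne' hd'.ne', mul_comm (c : K)]; exact_mod_cast sub_eq_zero.1 h0
  have hdist : 1 / (b * d) ≤ |(a / b : K) - c / d| := by
    rw [div_sub_div _ _ hb'.ne' hd'.ne', abs_div, abs_of_pos (mul_pos hb' hd')]
    gcongr
    exact_mod_cast Int.one_le_abs hcross
  rw [abs_sub_comm x] at h
  linarith [abs_sub_le (a / b : K) x (c / d)]

theorem frequently_lt_log_div_log_iff {ι : Type*} {l : Filter ι} {u v : ι → ℝ}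
    (hu : ∀ᶠ i in l, 1 < u i) (hv : ∀ i, 0 < v i) :
    (∀ C : ℝ, ∃ᶠ i in l, C < log (v i) / log (u i)) ↔ ∀ k : ℕ, ∃ᶠ i in l, u i ^ k < v i := by
  have key : ∀ᶠ i in l, ∀ k : ℕ, u i ^ k < v i ↔ k < log (v i) / log (u i) :=
    hu.mono fun i hi k => by
      rw [lt_div_iff₀ (log_pos hi), ← log_pow, log_lt_log_iff (by positivity) (hv i)]
  refine ⟨fun h k => ?_, fun h C => ?_⟩
  · exact ((h k).and_eventually key).mono fun i ⟨hlt, hiff⟩ => (hiff k).2 hlt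
  · exact ((h ⌈C⌉₊).and_eventually key).mono fun i ⟨hlt, hiff⟩ =>
      ((hiff _).1 hlt).trans_le' (Nat.le_ceil C)

open GenContFract

namespace Irrational

variable {α : ℝ} (hα : Irrational α)
include hα

theorem not_terminates_of : ¬(GenContFract.of α).Terminates := fun h =>
  hα.ne_rat _ ((terminates_iff_rat α).1 h).choose_spec

theorem not_terminatedAt_of (n : ℕ) : ¬(GenContFract.of α).TerminatedAt n := fun h =>
  hα.not_terminates_of ⟨n, h⟩

theorem convs_eq_of_abs_sub_lt {m : ℤ} {d n : ℕ} (hd : 0 < d)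
    (hlt : (GenContFract.of α).dens n < 2 * d) (hle : 2 * d ≤ (GenContFract.of α).dens (n + 1))
    (h : |α - m / d| < 1 / (4 * (d : ℝ) ^ 2)) :
    (GenContFract.of α).convs n = m / d := by
  obtain ⟨a, ha⟩ := exists_int_eq_nums α n
  obtain ⟨b, hb⟩ := exists_int_eq_dens α n
  have hconv : (GenContFract.of α).convs n = a / b := by rw [conv_eq_num_div_den, ha, hb]
  have hup := abs_sub_convs_le (hα.not_terminatedAt_of n)
  have hq := one_le_dens hα.not_terminates_of n
  set Q := (GenContFract.of α).dens n
  have hb0 : 0 < b := by exact_mod_cast (hb ▸ hq.trans_lt' one_pos : (0 : ℝ) < b)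
  rw [hconv, ← Int.cast_natCast d]
  refine div_eq_div_of_abs_sub_add_abs_sub_lt (x := α) hb0 (by omega) ?_
  rw [← hconv, ← hb, Int.cast_natCast]
  calc |α - _| + |α - m / d| < 1 / (Q * (GenContFract.of α).dens (n + 1)) + 1 / (4 * d ^ 2) :=
        add_lt_add_of_le_of_lt hup h
    _ ≤ 1 / (Q * (2 * d)) + 1 / (Q * (2 * d)) := by
        gcongr 1 / ?_ + 1 / ?_ <;> nlinarith
    _ = 1 / (Q * d) := by field_simp; ring

theorem exists_dens_pow_lt_of_abs_sub_lt {m : ℤ} {d : ℕ} (hd : 2 ≤ d) (k : ℕ)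
    (h : |α - m / d| < 1 / (d : ℝ) ^ (2 * k + 4)) :
    ∃ n, 2 * (d : ℝ) ≤ (GenContFract.of α).dens (n + 1) ∧
      (GenContFract.of α).dens n ^ k < (GenContFract.of α).dens (n + 1) := by
  have hD : (2 : ℝ) ≤ d := by exact_mod_cast hd
  obtain ⟨n, hlt, hle⟩ := exists_lt_and_le_succ (f := (GenContFract.of α).dens) (y := 2 * d)
    (by rw [zeroth_den_eq_one]; linarith) (exists_le_dens hα.not_terminates_of _)
  refine ⟨n, hle, ?_⟩
  have hd4 : 4 * (d : ℝ) ^ 2 ≤ (d : ℝ) ^ (2 * k + 4) := calc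
    4 * (d : ℝ) ^ 2 ≤ (d : ℝ) ^ 4 := by nlinarith [mul_le_mul_of_nonneg_left hD (sq_nonneg (d : ℝ))]
    _ ≤ (d : ℝ) ^ (2 * k + 4) := pow_le_pow_right₀ (by linarith) (by omega)
  have hconv := hα.convs_eq_of_abs_sub_lt (by omega) hlt hle
    (h.trans_le (one_div_le_one_div_of_le (by positivity) hd4))
  have hlow := one_div_lt_abs_sub_convs (hα.not_terminatedAt_of n)
  have hq := one_le_dens hα.not_terminates_of n
  have hmono : (GenContFract.of α).dens n ≤ (GenContFract.of α).dens (n + 1) := of_den_mono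
  set Q := (GenContFract.of α).dens n
  set Q' := (GenContFract.of α).dens (n + 1)
  have hgap : (d : ℝ) ^ (2 * k + 4) < 4 * d * Q' := by
    rw [hconv] at hlow
    have := (one_div_lt_one_div (by nlinarith) (by positivity)).1 (hlow.trans h)
    nlinarith
  have hQk : Q ^ k ≤ (d : ℝ) ^ (2 * k) := calc
    Q ^ k ≤ ((d : ℝ) ^ 2) ^ k := pow_le_pow_left₀ (by positivity) (by nlinarith) k
    _ = (d : ℝ) ^ (2 * k) := by rw [← pow_mul, mul_comm]
  have hd3 : 4 * (d : ℝ) ≤ (d : ℝ) ^ 4 := by nlinarith [pow_le_pow_left₀ (by norm_num) hD 3]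
  have : 4 * d * Q ^ k < 4 * d * Q' := calc
    4 * d * Q ^ k ≤ (d : ℝ) ^ 4 * (d : ℝ) ^ (2 * k) := by gcongr
    _ = (d : ℝ) ^ (2 * k + 4) := by ring
    _ < 4 * d * Q' := hgap
  exact lt_of_mul_lt_mul_left this (by positivity)

theorem liouville_of_frequently_dens_pow_lt
    (h : ∀ k : ℕ, ∃ᶠ n in atTop,
      (GenContFract.of α).dens n ^ k < (GenContFract.of α).dens (n + 1)) :
    Liouville α := by
  intro k
  obtain ⟨n, hn, hlt⟩ := ((eventually_ge_atTop 2).and_frequently (h k)).exists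
  obtain ⟨a, ha⟩ := exists_int_eq_nums α n
  obtain ⟨b, hb⟩ := exists_int_eq_dens α n
  have hb1 := one_lt_dens hα.not_terminates_of hn
  have hconv : (GenContFract.of α).convs n = a / b := by rw [conv_eq_num_div_den, ha, hb]
  have hq' : 0 < (GenContFract.of α).dens (n + 1) := hlt.trans_le' (by positivity)
  refine ⟨a, b, by exact_mod_cast hb ▸ hb1, hα.ne_rational a b, ?_⟩
  rw [← hconv, ← hb]
  calc |α - _| ≤ 1 / ((GenContFract.of α).dens n * (GenContFract.of α).dens (n + 1)) :=
        abs_sub_convs_le (hα.not_terminatedAt_of n)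
    _ ≤ 1 / (GenContFract.of α).dens (n + 1) :=
        one_div_le_one_div_of_le hq' (le_mul_of_one_le_left hq'.le hb1.le)
    _ < 1 / (GenContFract.of α).dens n ^ k := one_div_lt_one_div_of_lt (by positivity) hlt

end Irrational

theorem Liouville.frequently_dens_pow_lt {α : ℝ} (h : Liouville α) (k : ℕ) :
    ∃ᶠ n in atTop, (GenContFract.of α).dens n ^ k < (GenContFract.of α).dens (n + 1) := by
  have hmono : Monotone (GenContFract.of α).dens := monotone_nat_of_le_succ fun _ => of_den_mono
  refine frequently_atTop.2 fun N => ?_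
  obtain ⟨d, hd, m, -, hm⟩ :=
    ((eventually_ge_atTop (max 2 ⌈(GenContFract.of α).dens N⌉₊)).and_frequently
      (h.frequently_exists_num (2 * k + 4))).exists
  obtain ⟨n, hle, hlt⟩ :=
    h.irrational.exists_dens_pow_lt_of_abs_sub_lt (le_of_max_le_left hd) k hm
  refine ⟨n, ?_, hlt⟩
  by_contra! hn
  have hdN : (GenContFract.of α).dens N ≤ d :=
    (Nat.le_ceil _).trans (by exact_mod_cast le_of_max_le_right hd)
  have := hmono (show n + 1 ≤ N by omega)
  have : (0 : ℝ) < d := by exact_mod_cast (le_of_max_le_left hd).trans_lt' two_pos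
  linarith

theorem liouville_iff_limsup_log_dens_ratio (α : ℝ) (hα : Irrational α) :
    (∀ C : ℝ, ∃ᶠ n : ℕ in Filter.atTop,
        C < Real.log ((GenContFract.of α).dens (n + 1)) /
              Real.log ((GenContFract.of α).dens n)) ↔
      Liouville α := by
  have hdens_gt : ∀ᶠ n in atTop, 1 < (GenContFract.of α).dens n :=
    eventually_atTop.2 ⟨2, fun _ => one_lt_dens hα.not_terminates_of⟩
  rw [frequently_lt_log_div_log_iff hdens_gt
    fun n => one_pos.trans_le (one_le_dens hα.not_terminates_of (n + 1))]
  exact ⟨hα.liouville_of_frequently_dens_pow_lt, Liouville.frequently_dens_pow_lt⟩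
end

section
/- Let I be a non-empty open interval of ℝ and let (f_n) be a sequence of continuous real functions on I, each of which is nowhere locally constant. Then there exists an uncountable G_delta set E ⊆ ℒ ∩ I of Liouville numbers such that f_n(E) ⊆ ℒ for all n, where ℒ denotes the set of Liouville numbers. -/
open Set Filter

theorem kumar_thangadurai_waldschmidt
    (a b : ℝ) (hab : a < b) (f : ℕ → ℝ → ℝ)
    (hcont : ∀ n, ContinuousOn (f n) (Set.Ioo a b))
    (hnlc : ∀ n, ∀ c d : ℝ, a ≤ c → c < d → d ≤ b →
      ¬∃ k : ℝ, ∀ x ∈ Set.Ioo c d, f n x = k) :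
    ∃ E : Set ℝ, E ⊆ {x | Liouville x} ∩ Set.Ioo a b ∧ IsGδ E ∧
      ¬E.Countable ∧ ∀ n, f n '' E ⊆ {x | Liouville x} := by
  obtain ⟨U, hUo, hLU⟩ := IsGδ.setOf_liouville.eq_iInter_nat
  have hLdense : Dense {x : ℝ | Liouville x} :=
    dense_of_mem_residual eventually_residual_liouville
  have hUd : ∀ m, Dense (U m) := fun m =>
    hLdense.mono (by rw [hLU]; exact iInter_subset U m)
  set V : ℕ → ℕ → Set ℝ := fun n m => Ioo a b ∩ f n ⁻¹' U m with hVdef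
  have hVo : ∀ n m, IsOpen (V n m) := fun n m =>
    (hcont n).isOpen_inter_preimage isOpen_Ioo (hUo m)
  have hVsub : ∀ n m, V n m ⊆ Ioo a b := fun n m => inter_subset_left
  -- key density fact: every open set meeting `Ioo a b` meets `V n m`
  have key : ∀ n m (o : Set ℝ), IsOpen o → (o ∩ Ioo a b).Nonempty →
      (o ∩ V n m).Nonempty := by
    rintro n m o ho ⟨x, hxo, hx⟩
    obtain ⟨ε, hε, hball⟩ := Metric.isOpen_iff.1 ho x hxo
    set c := max a (x - ε) with hc
    set d := min b (x + ε) with hd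
    have hcd : c < d :=
      lt_min (max_lt hab (by linarith [hx.2])) (max_lt (by linarith [hx.1]) (by linarith))
    have hIoo : Ioo c d ⊆ Ioo a b := Ioo_subset_Ioo (le_max_left _ _) (min_le_left _ _)
    have hIoo_o : Ioo c d ⊆ o := by
      intro y hy
      apply hball
      rw [Metric.mem_ball, Real.dist_eq, abs_lt]
      have h1 : x - ε ≤ c := le_max_right _ _
      have h2 : d ≤ x + ε := min_le_right _ _
      constructor <;> [linarith [hy.1]; linarith [hy.2]]
    have hnc := hnlc n c d (le_max_left _ _) hcd (min_le_left _ _)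
    push_neg at hnc
    set q := (c + d) / 2 with hq
    have hqmem : q ∈ Ioo c d := ⟨by rw [hq]; linarith, by rw [hq]; linarith⟩
    obtain ⟨p, hpmem, hpq⟩ := hnc (f n q)
    have huIcc : uIcc p q ⊆ Ioo c d :=
      (Set.ordConnected_Ioo).uIcc_subset hpmem hqmem
    have hfc : ContinuousOn (f n) (uIcc p q) :=
      (hcont n).mono (huIcc.trans hIoo)
    have hivt := intermediate_value_uIcc hfc
    have hne : (Ioo (min (f n p) (f n q)) (max (f n p) (f n q))).Nonempty :=
      nonempty_Ioo.2 (min_lt_max.2 hpq)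
    obtain ⟨y, hyU, hyI⟩ := (hUd m).exists_mem_open isOpen_Ioo hne
    have hyIcc : y ∈ uIcc (f n p) (f n q) := Ioo_subset_Icc_self hyI
    obtain ⟨z, hz, hfz⟩ := hivt hyIcc
    exact ⟨z, hIoo_o (huIcc hz), hIoo (huIcc hz), by rw [Set.mem_preimage, hfz]; exact hyU⟩
  -- enlarged dense open sets
  set V' : ℕ → ℕ → Set ℝ := fun n m => V n m ∪ Iio a ∪ Ioi b with hV'def
  have hV'o : ∀ n m, IsOpen (V' n m) := fun n m =>
    ((hVo n m).union isOpen_Iio).union isOpen_Ioi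
  have hV'd : ∀ n m, Dense (V' n m) := by
    intro n m x
    rcases le_or_gt x a with hxa | hxa
    · have : x ∈ closure (Iio a) := by rw [closure_Iio]; exact hxa
      exact closure_mono (fun y hy => Or.inl (Or.inr hy)) this
    · rcases le_or_gt b x with hbx | hbx
      · have : x ∈ closure (Ioi b) := by rw [closure_Ioi]; exact hbx
        exact closure_mono (fun y hy => Or.inr hy) this
      · rw [mem_closure_iff]
        intro o ho hxo
        obtain ⟨z, hzo, hzV⟩ := key n m o ho ⟨x, hxo, hxa, hbx⟩
        exact ⟨z, hzo, Or.inl (Or.inl hzV)⟩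
  -- the set E
  refine ⟨{x | Liouville x} ∩ ⋂ (p : ℕ × ℕ), V p.1 p.2, ?_, ?_, ?_, ?_⟩
  · exact fun x hx => ⟨hx.1, hVsub 0 0 (mem_iInter.1 hx.2 (0, 0))⟩
  · exact IsGδ.setOf_liouville.inter (.iInter fun p => (hVo p.1 p.2).isGδ)
  · intro hcnt
    set S : Set ℝ := (⋂ m, U m) ∩ ⋂ (p : ℕ × ℕ), V' p.1 p.2 with hSdef
    have hSres : S ∈ residual ℝ :=
      inter_mem (countable_iInter_mem.2 fun m => residual_of_dense_open (hUo m) (hUd m))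
        (countable_iInter_mem.2 fun p => residual_of_dense_open (hV'o p.1 p.2) (hV'd p.1 p.2))
    have hSE : S ∩ Ioo a b ⊆ {x | Liouville x} ∩ ⋂ (p : ℕ × ℕ), V p.1 p.2 := by
      rintro x ⟨⟨hx1, hx2⟩, hxI⟩
      refine ⟨by rw [hLU]; exact hx1, mem_iInter.2 fun p => ?_⟩
      rcases mem_iInter.1 hx2 p with (h | h) | h
      · exact h
      · exact absurd hxI.1 (not_lt.2 h.le)
      · exact absurd hxI.2 (not_lt.2 h.le)
    have hcompl : ({x | Liouville x} ∩ ⋂ (p : ℕ × ℕ), V p.1 p.2)ᶜ ∈ residual ℝ := by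
      rw [← Set.biUnion_of_singleton ({x | Liouville x} ∩ ⋂ (p : ℕ × ℕ), V p.1 p.2),
        Set.compl_iUnion₂]
      exact (countable_bInter_mem hcnt).2 fun x _ =>
        residual_of_dense_open isOpen_compl_singleton (dense_compl_singleton x)
    have hT : Dense (S ∩ ({x | Liouville x} ∩ ⋂ (p : ℕ × ℕ), V p.1 p.2)ᶜ) :=
      dense_of_mem_residual (inter_mem hSres hcompl)
    obtain ⟨z, ⟨hzS, hzC⟩, hzI⟩ := hT.exists_mem_open isOpen_Ioo (nonempty_Ioo.2 hab)
    exact hzC (hSE ⟨hzS, hzI⟩)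
  · rintro n y ⟨x, ⟨_, hx2⟩, rfl⟩
    rw [hLU]
    exact mem_iInter.2 fun m => (mem_iInter.1 hx2 (n, m)).2
end

section
/- For every integer b ≥ 1 and every nonempty open interval I ⊆ (0,∞), there exist uncountably many Liouville numbers ζ ∈ I such that ζ^{1/b} is also a Liouville number. -/
/-! If `|x - p/q| < q^(-N)` for large `N`, then `|x^b - p^b/q^b| ≤ C |x - p/q|` is still tiny
against the denominator `q^b`, so `b`-th powers of Liouville numbers are Liouville. Take `ζ = y^b`
with `y` a Liouville number among the positive `b`-th roots of `(c, d)`: these `y` form a residual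
subset of a nonempty open set, which is uncountable by Baire's theorem. -/

open Filter Topology Set

theorem abs_pow_sub_pow_le_of_abs_sub_le_one {α : Type*} [CommRing α] [LinearOrder α]
    [IsOrderedRing α] {x y : α} (h : |x - y| ≤ 1) (n : ℕ) :
    |x ^ n - y ^ n| ≤ |x - y| * n * (|x| + 1) ^ (n - 1) := by
  refine (abs_pow_sub_pow_le x y n).trans ?_
  have hy : |y| ≤ |x| + 1 :=
    le_add_of_sub_left_le ((abs_sub_abs_le_abs_sub y x).trans (abs_sub_comm y x ▸ h))
  gcongr
  exact max_le (le_add_of_nonneg_right zero_le_one) hy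

theorem Liouville.pow {x : ℝ} (hx : Liouville x) {n : ℕ} (hn : n ≠ 0) : Liouville (x ^ n) := by
  intro k
  obtain ⟨m, hm⟩ := pow_unbounded_of_one_lt ((n : ℝ) * (|x| + 1) ^ (n - 1)) one_lt_two
  obtain ⟨p, q, hq, hne, hlt⟩ := hx (k * n + m)
  have hq2 : (2 : ℝ) ≤ q := by exact_mod_cast hq
  have hq0 : (0 : ℝ) < q := by linarith
  refine ⟨p ^ n, q ^ n, one_lt_pow₀ hq hn, ?_, ?_⟩ <;> push_cast <;> rw [← div_pow]
  · intro h
    rcases (pow_eq_pow_iff_of_ne_zero hn).1 h with h | ⟨h, -⟩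
    · exact hne h
    · exact hx.irrational ⟨-(p / q : ℚ), by push_cast; exact h.symm⟩
  · have hclose : |x - p / q| ≤ 1 :=
      hlt.le.trans (div_le_one_of_le₀ (one_le_pow₀ (by linarith)) (by positivity))
    calc |x ^ n - (p / q) ^ n| ≤ |x - p / q| * (n * (|x| + 1) ^ (n - 1)) := by
          rw [← mul_assoc]; exact abs_pow_sub_pow_le_of_abs_sub_le_one hclose n
      _ ≤ |x - p / q| * q ^ m := by
          gcongr; exact hm.le.trans (pow_le_pow_left₀ zero_le_two hq2 m)
      _ < 1 / q ^ (k * n + m) * q ^ m := by gcongr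
      _ = 1 / (q ^ n) ^ k := by
          rw [pow_add, ← pow_mul, mul_comm k n]; field_simp

theorem Set.Countable.compl_mem_residual {X : Type*} [TopologicalSpace X] [T1Space X]
    [∀ x : X, NeBot (𝓝[≠] x)] {s : Set X} (hs : s.Countable) : sᶜ ∈ residual X := by
  rw [← biUnion_of_singleton s, compl_iUnion₂]
  exact (countable_bInter_mem hs).2 fun x _ ↦
    residual_of_dense_open isOpen_compl_singleton (dense_compl_singleton x)

theorem not_countable_inter_of_mem_residual {X : Type*} [TopologicalSpace X] [BaireSpace X]
    [T1Space X] [∀ x : X, NeBot (𝓝[≠] x)] {s U : Set X} (hs : s ∈ residual X) (hU : IsOpen U)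
    (hne : U.Nonempty) : ¬(s ∩ U).Countable := by
  intro hcount
  obtain ⟨x, ⟨hxs, hx⟩, hxU⟩ :=
    (dense_of_mem_residual (inter_mem hs hcount.compl_mem_residual)).exists_mem_open hU hne
  exact hx ⟨hxs, hxU⟩

theorem uncountably_many_liouville_with_liouville_root
    (b : ℕ) (hb : 1 ≤ b) (c d : ℝ) (hc : 0 ≤ c) (hcd : c < d) :
    ∃ E : Set ℝ, E ⊆ Set.Ioo c d ∧ ¬E.Countable ∧
      ∀ ζ ∈ E, Liouville ζ ∧ Liouville (ζ ^ ((b : ℝ)⁻¹)) := by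
  have hb0 : b ≠ 0 := Nat.one_le_iff_ne_zero.1 hb
  set U : Set ℝ := Ioi 0 ∩ (· ^ b) ⁻¹' Ioo c d
  have hU : IsOpen U := isOpen_Ioi.inter (isOpen_Ioo.preimage (continuous_pow b))
  have hUne : U.Nonempty := by
    refine ⟨((c + d) / 2) ^ (b⁻¹ : ℝ), Real.rpow_pos_of_pos (by linarith) _, ?_⟩
    simp only [mem_preimage, Real.rpow_inv_natCast_pow (by linarith : (0 : ℝ) ≤ (c + d) / 2) hb0]
    constructor <;> linarith
  have hroot : ∀ y ∈ U, (y ^ b) ^ (b⁻¹ : ℝ) = y := fun y hy ↦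
    Real.pow_rpow_inv_natCast (le_of_lt hy.1) hb0
  set F : Set ℝ := {y | Liouville y} ∩ U
  refine ⟨(· ^ b) '' F, ?_, fun hE ↦ ?_, ?_⟩
  · rintro _ ⟨y, ⟨-, -, hy⟩, rfl⟩
    exact hy
  · have hF : F ⊆ (· ^ (b⁻¹ : ℝ)) '' ((· ^ b) '' F) := fun y hy ↦
      ⟨y ^ b, mem_image_of_mem _ hy, hroot y hy.2⟩
    exact not_countable_inter_of_mem_residual eventually_residual_liouville hU hUne
      ((hE.image _).mono hF)
  · rintro _ ⟨y, ⟨hy, hyU⟩, rfl⟩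
    exact ⟨hy.pow hb0, (hroot y hyU).symm ▸ hy⟩
end

section
/- If ζ > 0 is a Liouville number, a, b are coprime integers with b ≥ 2, ζ^{a/b} is also a Liouville number, and η > 0 is arbitrary, then the inequality |q^b ζ^a − p^b| ≤ q^{−η} has a solution in coprime positive integers p, q. -/
/-! Take a Liouville approximation `P / Q` of `ξ = ζ ^ (a / b)` with `|ξ - P / Q| < Q ^ (-(b + η + 1))`
and `Q ≥ C := b (ξ + 1) ^ (b - 1)`, and reduce it to lowest terms `p / q`, so `q ≤ Q`. Near `ξ` the
map `x ↦ x ^ b` is `C`-Lipschitz, hence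
`|q ^ b ξ ^ b - p ^ b| ≤ C q ^ b Q ^ (-(b + η + 1)) ≤ Q ^ (-η) ≤ q ^ (-η)`. -/

open Filter Real

theorem exists_coprime_div_eq_of_pos {P : ℤ} {Q : ℕ} (h : 0 < (P : ℝ) / Q) :
    ∃ p q : ℕ, 0 < p ∧ 0 < q ∧ p.Coprime q ∧ q ≤ Q ∧ (p : ℝ) / q = P / Q := by
  have hQ : 0 < Q := Nat.pos_of_ne_zero fun hQ => by simp [hQ] at h
  set r : ℚ := Rat.divInt P Q
  have hr : (r : ℝ) = P / Q := by simp [r, Rat.divInt_eq_div]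
  have hnum : 0 < r.num := Rat.num_pos.2 (by exact_mod_cast hr ▸ h)
  refine ⟨r.num.natAbs, r.den, Int.natAbs_pos.2 hnum.ne', r.den_pos, r.reduced,
    Nat.le_of_dvd hQ (by exact_mod_cast Rat.den_dvd P Q), ?_⟩
  rw [← hr, Rat.cast_def, Nat.cast_natAbs, abs_of_pos (by exact_mod_cast hnum)]

theorem Liouville.frequently_exists_coprime_abs_sub_lt {ξ : ℝ} (hξ : Liouville ξ) (hξ0 : 0 < ξ)
    {s : ℝ} (hs : 0 < s) :
    ∃ᶠ Q : ℕ in atTop, ∃ p q : ℕ, 0 < p ∧ 0 < q ∧ p.Coprime q ∧ q ≤ Q ∧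
      |ξ - p / q| < (Q : ℝ) ^ (-s) := by
  have hsmall : ∀ᶠ Q : ℕ in atTop, (Q : ℝ) ^ (-s) < ξ :=
    ((tendsto_rpow_neg_atTop hs).comp tendsto_natCast_atTop_atTop).eventually (gt_mem_nhds hξ0)
  refine (((hξ.liouvilleWith (s + 1)).frequently_lt_rpow_neg (lt_add_one s)).and_eventually
    hsmall).mono ?_
  rintro Q ⟨⟨P, -, happrox⟩, hQξ⟩
  obtain ⟨p, q, hp, hq, hpq, hqQ, heq⟩ :=
    exists_coprime_div_eq_of_pos (by linarith [(abs_lt.1 happrox).2] : 0 < (P : ℝ) / Q)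
  exact ⟨p, q, hp, hq, hpq, hqQ, heq ▸ happrox⟩

theorem abs_pow_sub_pow_le_of_abs_sub_le_one_s14 {x y : ℝ} (hx : 0 ≤ x) (hxy : |x - y| ≤ 1)
    (m : ℕ) : |x ^ m - y ^ m| ≤ m * (x + 1) ^ (m - 1) * |x - y| := by
  have hmax : max |x| |y| ≤ x + 1 := by
    refine max_le (by rw [abs_of_nonneg hx]; linarith) (abs_le.2 ⟨?_, ?_⟩) <;>
      linarith [abs_le.1 hxy]
  calc |x ^ m - y ^ m| ≤ |x - y| * m * max |x| |y| ^ (m - 1) := abs_pow_sub_pow_le ..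
    _ ≤ |x - y| * m * (x + 1) ^ (m - 1) := by gcongr
    _ = m * (x + 1) ^ (m - 1) * |x - y| := by ring

theorem rpow_intCast_div_natCast_pow {x : ℝ} (hx : 0 ≤ x) (a : ℤ) {m : ℕ} (hm : m ≠ 0) :
    (x ^ ((a : ℝ) / m)) ^ m = x ^ a := by
  rw [← rpow_natCast, ← rpow_mul hx, div_mul_cancel₀ _ (Nat.cast_ne_zero.2 hm), rpow_intCast]

theorem liouville_root_gives_power_approximations_general
    (ζ : ℝ) (hζpos : 0 < ζ)
    (a b : ℤ) (hb : 2 ≤ b)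
    (hroot : Liouville (ζ ^ ((a : ℝ) / (b : ℝ))))
    (η : ℝ) (hη : 0 < η) :
    ∃ p q : ℕ, 0 < p ∧ 0 < q ∧ Nat.Coprime p q ∧
      |(q : ℝ) ^ b * ζ ^ a - (p : ℝ) ^ b| ≤ (q : ℝ) ^ (-η) := by
  obtain ⟨m, rfl⟩ := Int.eq_ofNat_of_zero_le (by omega : (0 : ℤ) ≤ b)
  rw [Int.cast_natCast] at hroot
  set ξ := ζ ^ ((a : ℝ) / m)
  have hξm : ξ ^ m = ζ ^ a := rpow_intCast_div_natCast_pow hζpos.le a (by omega)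
  set C : ℝ := m * (ξ + 1) ^ (m - 1)
  obtain ⟨Q, ⟨p, q, hp, hq, hpq, hqQ, happrox⟩, hCQ⟩ :=
    ((hroot.frequently_exists_coprime_abs_sub_lt (rpow_pos_of_pos hζpos _)
      (s := m + η + 1) (by positivity)).and_eventually (eventually_ge_atTop ⌈C⌉₊)).exists
  refine ⟨p, q, hp, hq, hpq, ?_⟩
  have hq0 : (0 : ℝ) < q := by exact_mod_cast hq
  have hqQ' : (q : ℝ) ≤ Q := by exact_mod_cast hqQ
  have hQ0 : (0 : ℝ) < Q := hq0.trans_le hqQ'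
  have hclose : |ξ - p / q| ≤ 1 :=
    happrox.le.trans (rpow_le_one_of_one_le_of_nonpos (by exact_mod_cast hq.trans_le hqQ)
      (by linarith))
  simp only [zpow_natCast, ← hξm]
  calc |(q : ℝ) ^ m * ξ ^ m - p ^ m| = q ^ m * |ξ ^ m - (p / q) ^ m| := by
        rw [div_pow, ← abs_of_pos (pow_pos hq0 m), ← abs_mul, abs_of_pos (pow_pos hq0 m), mul_sub,
          mul_div_cancel₀ _ (pow_pos hq0 m).ne']
    _ ≤ q ^ m * (C * |ξ - p / q|) := by
        gcongr
        exact abs_pow_sub_pow_le_of_abs_sub_le_one_s14 (rpow_pos_of_pos hζpos _).le hclose m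
    _ ≤ Q ^ m * (Q * Q ^ (-(m + η + 1))) := by
        gcongr
        exact (Nat.le_ceil C).trans (by exact_mod_cast hCQ)
    _ = Q ^ (-η) := by
        rw [← rpow_natCast, ← mul_assoc, ← rpow_add_one hQ0.ne', ← rpow_add hQ0]
        ring_nf
    _ ≤ q ^ (-η) := rpow_le_rpow_of_nonpos hq0 hqQ' (by linarith)

theorem liouville_root_gives_power_approximations
    (ζ : ℝ) (hζpos : 0 < ζ) (hζ : Liouville ζ)
    (a b : ℤ) (hab : IsCoprime a b) (hb : 2 ≤ b)
    (hroot : Liouville (ζ ^ ((a : ℝ) / (b : ℝ))))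
    (η : ℝ) (hη : 0 < η) :
    ∃ p q : ℕ, 0 < p ∧ 0 < q ∧ Nat.Coprime p q ∧
      |(q : ℝ) ^ b * ζ ^ a - (p : ℝ) ^ b| ≤ (q : ℝ) ^ (-η) :=
  liouville_root_gives_power_approximations_general ζ hζpos a b hb hroot η hη
end
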